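/- arXiv:1605.09497 — 4 statements merged into one kernel-verified Lean document; each statement's English description precedes it below -/
import Mathlib

section
/- Consider a k-player interdependent scheduling game with uniform rewards where each player has q services, player 1's services are t_{1,1},…,t_{1,q}, and the dependency graph (before transitive closure) has an edge from t_{1,q} to every service of every other player and no other edges. Then the ratio of the maximum welfare over all schedules to the minimum welfare over all pure Nash equilibrium schedules is at least k(q+1)/(q+2k−1). In particular: (a) the schedule where each player i schedules t_{i,1},…,t_{i,q} in order (with t_{1,q} last) is a pure Nash equilibrium with welfare q(q+1)/2 + (k−1)q, and (b) there exists a schedule with welfare k·q(q+1)/2. -/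
open scoped Classical
noncomputable section

lemma gauss (q : ℕ) : ∑ j : Fin q, (q - (j : ℕ)) = q * (q + 1) / 2 := by
  rw [Fin.sum_univ_eq_sum_range]
  have h1 : ∑ j ∈ Finset.range q, (q - j) = ∑ j ∈ Finset.range q, (j + 1) := by
    rw [← Finset.sum_range_reflect (fun j => j + 1) q]
    refine Finset.sum_congr rfl fun j hj => ?_
    have := Finset.mem_range.mp hj
    omega
  rw [h1, Finset.sum_add_distrib, Finset.sum_const, Finset.card_range, smul_eq_mul,
    Finset.sum_range_id]
  have h2 : 2 ∣ q * (q - 1) := (Nat.even_mul_pred_self q).two_dvd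
  have h3 : q * (q + 1) = q * (q - 1) + 2 * q := by
    cases q with
    | zero => rfl
    | succ n => simp [Nat.succ_sub_one]; ring
  omega


/-- The (1-based) time slot at which service `v` is deployed. -/
def slot {k q : ℕ} (σ : Fin k → Equiv.Perm (Fin q)) (v : Fin k × Fin q) : ℕ :=
  (σ v.1 v.2 : ℕ) + 1

/-- Activation time of `v`: latest deployment among `v` and its in-neighbors. -/
def act {k q : ℕ} (E : Fin k × Fin q → Fin k × Fin q → Prop)
    (σ : Fin k → Equiv.Perm (Fin q)) (v : Fin k × Fin q) : ℕ :=
  (insert v (Finset.univ.filter fun w => E w v)).sup (slot σ)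

/-- Player `i`'s utility under uniform rewards. -/
def util {k q : ℕ} (E : Fin k × Fin q → Fin k × Fin q → Prop)
    (σ : Fin k → Equiv.Perm (Fin q)) (i : Fin k) : ℕ :=
  ∑ j : Fin q, (q + 1 - act E σ (i, j))

/-- Utilitarian social welfare. -/
def welfare {k q : ℕ} (E : Fin k × Fin q → Fin k × Fin q → Prop)
    (σ : Fin k → Equiv.Perm (Fin q)) : ℕ :=
  ∑ i : Fin k, util E σ i

/-- Pure Nash equilibrium: no unilateral deviation improves a player's utility. -/
def PNE {k q : ℕ} (E : Fin k × Fin q → Fin k × Fin q → Prop)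
    (σ : Fin k → Equiv.Perm (Fin q)) : Prop :=
  ∀ (i : Fin k) (τ : Equiv.Perm (Fin q)),
    util E (Function.update σ i τ) i ≤ util E σ i

theorem stmt_2 {k q : ℕ} (hk : 0 < k) (hq : 0 < q)
    (E : Fin k × Fin q → Fin k × Fin q → Prop)
    -- `E` is the transitive closure of the edges from player 1's last service
    -- `t_{1,q}` to every service of every other player
    (hE : E = Relation.TransGen (fun v w : Fin k × Fin q =>
      v = ((⟨0, hk⟩ : Fin k), (⟨q - 1, Nat.sub_lt hq Nat.one_pos⟩ : Fin q)) ∧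
        w.1 ≠ (⟨0, hk⟩ : Fin k))) :
    -- (a) the identity schedule is a PNE with welfare q(q+1)/2 + (k-1)q
    PNE E (fun _ => 1) ∧
    welfare E (fun _ => 1) = q * (q + 1) / 2 + (k - 1) * q ∧
    -- (b) some schedule attains welfare k·q(q+1)/2
    (∃ σstar : Fin k → Equiv.Perm (Fin q), welfare E σstar = k * (q * (q + 1)) / 2) ∧
    -- hence the max welfare / min PNE welfare ratio is at least k(q+1)/(q+2k−1)
    (∃ (σpne σstar : Fin k → Equiv.Perm (Fin q)), PNE E σpne ∧
      (k * (q + 1) : ℝ) / (q + 2 * k - 1) ≤ (welfare E σstar : ℝ) / (welfare E σpne : ℝ)) := by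

  set i0 : Fin k := ⟨0, hk⟩ with hi0
  set t0 : Fin k × Fin q := (i0, ⟨q - 1, Nat.sub_lt hq Nat.one_pos⟩) with ht0
  have hstep : ∀ v w : Fin k × Fin q, E v w ↔ (v = t0 ∧ w.1 ≠ i0) := by
    subst hE
    intro v w
    constructor
    · intro h
      induction h with
      | single h => exact h
      | tail _ h ih => exact absurd (h.1 ▸ rfl : _) ih.2
    · exact fun h => Relation.TransGen.single h
  have hfilter : ∀ v : Fin k × Fin q,
      (Finset.univ.filter fun w => E w v) = if v.1 = i0 then ∅ else {t0} := by
    intro v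
    by_cases hv : v.1 = i0 <;> ext w <;> simp [hstep, hv]
  have hact : ∀ (σ : Fin k → Equiv.Perm (Fin q)) (v : Fin k × Fin q),
      act E σ v = if v.1 = i0 then slot σ v else max (slot σ v) (slot σ t0) := by
    intro σ v
    unfold act
    rw [hfilter]
    by_cases hv : v.1 = i0 <;> simp [hv]
  have hslot_le : ∀ (σ : Fin k → Equiv.Perm (Fin q)) (v : Fin k × Fin q), slot σ v ≤ q :=
    fun σ v => Nat.succ_le_of_lt (σ v.1 v.2).isLt
  have hu0 : ∀ σ : Fin k → Equiv.Perm (Fin q), util E σ i0 = q * (q + 1) / 2 := by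
    intro σ
    have h1 : util E σ i0 = ∑ j : Fin q, (q - ((σ i0) j : ℕ)) := by
      unfold util
      refine Finset.sum_congr rfl fun j _ => ?_
      rw [hact]
      simp [slot, Nat.succ_sub_succ]
    rw [h1, Equiv.sum_comp (σ i0) (fun x : Fin q => q - (x : ℕ)), gauss]
  have hui : ∀ (σ : Fin k → Equiv.Perm (Fin q)) (i : Fin k), i ≠ i0 → slot σ t0 = q →
      util E σ i = q := by
    intro σ i hi hs
    unfold util
    have h1 : ∀ j : Fin q, act E σ (i, j) = q := by
      intro j
      rw [hact]
      simp only [hi, if_neg, hs]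
      exact max_eq_right (hslot_le σ (i, j))
    simp [h1]
  have hslot1 : ∀ σ : Fin k → Equiv.Perm (Fin q), σ i0 = 1 → slot σ t0 = q := by
    intro σ h
    simp only [slot, ht0, h, Equiv.Perm.coe_one, id_eq]
    omega
  have hPNE : PNE E (fun _ => 1) := by
    intro i τ
    by_cases hi : i = i0
    · subst hi; rw [hu0, hu0]
    · rw [hui _ i hi (hslot1 _ (Function.update_of_ne (Ne.symm hi) _ _)),
        hui _ i hi (hslot1 _ rfl)]
  have hwelf1 : welfare E (fun _ => 1) = q * (q + 1) / 2 + (k - 1) * q := by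
    unfold welfare
    rw [← Finset.add_sum_erase _ _ (Finset.mem_univ i0), hu0]
    congr 1
    rw [Finset.sum_congr rfl (fun i hi => hui _ i (Finset.mem_erase.mp hi).1 (hslot1 _ rfl)),
      Finset.sum_const, Finset.card_erase_of_mem (Finset.mem_univ i0), Finset.card_univ,
      Fintype.card_fin, smul_eq_mul]
  set a : Fin q := ⟨q - 1, Nat.sub_lt hq Nat.one_pos⟩ with ha
  set b : Fin q := ⟨0, hq⟩ with hb
  set σs : Fin k → Equiv.Perm (Fin q) := fun i => if i = i0 then Equiv.swap a b else 1 with hσs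
  have e2 : 2 ∣ q * (q + 1) := (Nat.even_mul_succ_self q).two_dvd
  have hwels : welfare E σs = k * (q * (q + 1)) / 2 := by
    have hst : slot σs t0 = 1 := by
      simp [slot, hσs, ht0, ha, hb, Equiv.swap_apply_left]
    have hus : ∀ i : Fin k, util E σs i = q * (q + 1) / 2 := by
      intro i
      by_cases hi : i = i0
      · subst hi; exact hu0 σs
      · have h1 : util E σs i = ∑ j : Fin q, (q - (j : ℕ)) := by
          unfold util
          refine Finset.sum_congr rfl fun j _ => ?_
          have hA : act E σs (i, j) = max ((j : ℕ) + 1) 1 := by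
            rw [hact]
            have h2 : slot σs (i, j) = (j : ℕ) + 1 := by simp [slot, hσs, hi]
            simp [hi, hst, h2]
          rw [hA, max_eq_left (by omega)]
          omega
        rw [h1, gauss]
    unfold welfare
    rw [Finset.sum_congr rfl (fun i _ => hus i), Finset.sum_const, Finset.card_univ,
      Fintype.card_fin, smul_eq_mul, Nat.mul_div_assoc k e2]
  refine ⟨hPNE, hwelf1, ⟨σs, hwels⟩, ⟨fun _ => 1, σs, hPNE, le_of_eq ?_⟩⟩
  rw [hwels, hwelf1]
  have hk1 : (1 : ℝ) ≤ (k : ℝ) := by exact_mod_cast hk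
  have hq1 : (1 : ℝ) ≤ (q : ℝ) := by exact_mod_cast hq
  have hc1 : ((k * (q * (q + 1)) / 2 : ℕ) : ℝ) = (k : ℝ) * ((q : ℝ) * ((q : ℝ) + 1)) / 2 := by
    rw [Nat.cast_div (e2.mul_left k) (by norm_num)]
    push_cast
    ring
  have hc2 : ((q * (q + 1) / 2 + (k - 1) * q : ℕ) : ℝ)
      = (q : ℝ) * ((q : ℝ) + 1) / 2 + ((k : ℝ) - 1) * (q : ℝ) := by
    rw [Nat.cast_add, Nat.cast_div e2 (by norm_num)]
    push_cast [Nat.cast_sub hk]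
    ring
  rw [hc1, hc2]
  have hd1 : (q : ℝ) + 2 * (k : ℝ) - 1 ≠ 0 := by nlinarith
  have hd2 : (q : ℝ) * ((q : ℝ) + 1) / 2 + ((k : ℝ) - 1) * (q : ℝ) ≠ 0 := by nlinarith
  rw [div_eq_div_iff hd1 hd2]
  ring
end
end

section
/- In the two-player ISG instance with general rewards defined below, no schedule (π_1, π_2) is a pure Nash equilibrium. -/
open scoped Classical
noncomputable section

/-- Player `i`'s utility under rewards `r`. -/
def utilR {k q : ℕ} (E : Fin k × Fin q → Fin k × Fin q → Prop)
    (r : Fin k × Fin q → ℝ) (σ : Fin k → Equiv.Perm (Fin q)) (i : Fin k) : ℝ :=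
  ∑ j : Fin q, r (i, j) * ((q + 1 - act E σ (i, j) : ℕ) : ℝ)

/-- Utilitarian social welfare. -/
def welfareR {k q : ℕ} (E : Fin k × Fin q → Fin k × Fin q → Prop)
    (r : Fin k × Fin q → ℝ) (σ : Fin k → Equiv.Perm (Fin q)) : ℝ :=
  ∑ i : Fin k, utilR E r σ i

/-- Pure Nash equilibrium: no unilateral deviation improves a player's utility. -/
def PNER {k q : ℕ} (E : Fin k × Fin q → Fin k × Fin q → Prop)
    (r : Fin k × Fin q → ℝ) (σ : Fin k → Equiv.Perm (Fin q)) : Prop :=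
  ∀ (i : Fin k) (τ : Equiv.Perm (Fin q)),
    utilR E r (Function.update σ i τ) i ≤ utilR E r σ i

/-- Base edges: (u₁,u₂), (u₂,w₂), (w₁,u₃), (w₃,w₄), (w₄,u₄), with player 1's
services u₁..u₄ at indices (0,0)..(0,3) and player 2's w₁..w₄ at (1,0)..(1,3). -/
def base4 : Fin 2 × Fin 4 → Fin 2 × Fin 4 → Prop := fun v w =>
  (v, w) ∈ ([((0, 0), (0, 1)), ((0, 1), (1, 1)), ((1, 0), (0, 2)),
             ((1, 2), (1, 3)), ((1, 3), (0, 3))] :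
      List ((Fin 2 × Fin 4) × (Fin 2 × Fin 4)))

/-- The dependency relation: transitive closure of the base edges. -/
def E4 : Fin 2 × Fin 4 → Fin 2 × Fin 4 → Prop := Relation.TransGen base4

/-- Rewards: player 1: 1, 4, 3, 2; player 2: 2, 4, 1, 3. -/
def r4 : Fin 2 × Fin 4 → ℝ := fun v => ![![1, 4, 3, 2], ![2, 4, 1, 3]] v.1 v.2

/-!
Player 1's best response deploys `u₁, u₂` in the first two slots, unless `w₁` is deployed
first: then `u₃` goes first and `u₂` is only activated at slot 3. Player 2's best response to
`u₂` activated at slot 2 deploys `w₁` first (so `w₂` need not wait), and to `u₂` activated at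
slot 3 deploys `w₁` last. The best responses therefore cycle.
-/

open Equiv

instance : DecidableRel base4 := fun v w => by unfold base4; infer_instance

def preds4 (v : Fin 2 × Fin 4) : Finset (Fin 2 × Fin 4) :=
  ![![∅, {(0, 0)}, {(1, 0)}, {(1, 2), (1, 3)}], ![∅, {(0, 0), (0, 1)}, ∅, {(1, 2)}]] v.1 v.2

theorem E4_iff_mem_preds4 (w v : Fin 2 × Fin 4) : E4 w v ↔ w ∈ preds4 v := by
  have base4_le : ∀ w v, base4 w v → w ∈ preds4 v := by decide
  have : IsTrans _ fun w v => w ∈ preds4 v := ⟨by decide⟩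
  have preds4_le_two_steps : ∀ w v, w ∈ preds4 v → base4 w v ∨ ∃ u, base4 w u ∧ base4 u v := by
    decide
  refine ⟨fun h => Relation.transGen_minimal base4_le w v h, fun h => ?_⟩
  rcases preds4_le_two_steps w v h with h | ⟨u, hwu, huv⟩
  · exact .single h
  · exact .tail (.single hwu) huv

theorem act_E4 (σ : Fin 2 → Perm (Fin 4)) (v : Fin 2 × Fin 4) :
    act E4 σ v = (insert v (preds4 v)).sup (slot σ) := by
  rw [act]
  congr 2
  ext w
  simp [E4_iff_mem_preds4]

/-- Player 1's utility in 0-based slots (so `4 - x` is `5 - a(v)`), given the slot `p` of `w₁`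
and the activation slot `q` of `w₄`, the only inputs from player 2. -/
def payoff₁ (a : Perm (Fin 4)) (p q : Fin 4) : ℕ :=
  1 * (4 - a 0 : ℕ) + 4 * (4 - max (a 0) (a 1) : ℕ) + 3 * (4 - max (a 2) p : ℕ)
    + 2 * (4 - max (a 3) q : ℕ)

/-- Player 2's utility in 0-based slots, given the activation slot `m` of `u₂`. -/
def payoff₂ (b : Perm (Fin 4)) (m : Fin 4) : ℕ :=
  2 * (4 - b 0 : ℕ) + 4 * (4 - max (b 1) m : ℕ) + 1 * (4 - b 2 : ℕ)
    + 3 * (4 - max (b 2) (b 3) : ℕ)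

theorem utilR_E4_zero (σ : Fin 2 → Perm (Fin 4)) :
    utilR E4 r4 σ 0 = payoff₁ (σ 0) (σ 1 0) (max (σ 1 2) (σ 1 3)) := by
  simp [utilR, act_E4, Fin.sum_univ_four, preds4, slot, r4, payoff₁, max_comm]

theorem utilR_E4_one (σ : Fin 2 → Perm (Fin 4)) :
    utilR E4 r4 σ 1 = payoff₂ (σ 1) (max (σ 0 0) (σ 0 1)) := by
  simp [utilR, act_E4, Fin.sum_univ_four, preds4, slot, r4, payoff₂, max_comm]

theorem max_eq_of_payoff₁_le {a : Perm (Fin 4)} {p q : Fin 4}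
    (h : ∀ τ, payoff₁ τ p q ≤ payoff₁ a p q) : max (a 0) (a 1) = if p = 0 then 2 else 1 := by
  revert a p q
  decide

theorem apply_zero_eq_of_payoff₂_le {b : Perm (Fin 4)} {m : Fin 4}
    (h : ∀ τ, payoff₂ τ m ≤ payoff₂ b m) :
    (m = 1 → b 0 = 0) ∧ (m = 2 → b 0 = 3) := by
  revert b m
  decide

theorem PNER.payoff₁_le {σ : Fin 2 → Perm (Fin 4)} (h : PNER E4 r4 σ) (τ : Perm (Fin 4)) :
    payoff₁ τ (σ 1 0) (max (σ 1 2) (σ 1 3)) ≤ payoff₁ (σ 0) (σ 1 0) (max (σ 1 2) (σ 1 3)) := by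
  have := h 0 τ
  rwa [utilR_E4_zero, utilR_E4_zero, Function.update_self,
    Function.update_of_ne one_ne_zero, Nat.cast_le] at this

theorem PNER.payoff₂_le {σ : Fin 2 → Perm (Fin 4)} (h : PNER E4 r4 σ) (τ : Perm (Fin 4)) :
    payoff₂ τ (max (σ 0 0) (σ 0 1)) ≤ payoff₂ (σ 1) (max (σ 0 0) (σ 0 1)) := by
  have := h 1 τ
  rwa [utilR_E4_one, utilR_E4_one, Function.update_self,
    Function.update_of_ne zero_ne_one, Nat.cast_le] at this

/-- This two-player ISG with general rewards admits no pure Nash equilibrium. -/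
theorem stmt_4 : ¬ ∃ σ : Fin 2 → Equiv.Perm (Fin 4), PNER E4 r4 σ := by
  rintro ⟨σ, h⟩
  have h₁ := max_eq_of_payoff₁_le h.payoff₁_le
  obtain ⟨h₂, h₃⟩ := apply_zero_eq_of_payoff₂_le h.payoff₂_le
  split_ifs at h₁ with hp
  · exact absurd (h₃ h₁) (by rw [hp]; decide)
  · exact hp (h₂ h₁)
end
end

section
/- Let G = (T, E) be a transitive DAG of dependencies for a k-player ISG with general nonnegative rewards, let i be a player, and let E_i = E ∩ (T_i × T_i). For any fixed schedules π_{−i} of the other players, there exists a best response π_i for player i (a bijection T_i → {1,…,|T_i|} maximizing player i's utility) such that π_i(u) < π_i(v) for all (u,v) ∈ E_i. -/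
open scoped Classical
noncomputable section

/-- There is a best response of player `i` that schedules its own services in an
order compatible with the dependencies among them (Lemma 1). -/
theorem stmt_7 {k q : ℕ} (E : Fin k × Fin q → Fin k × Fin q → Prop)
    (hTrans : Transitive E) (hIrr : Irreflexive E)
    (r : Fin k × Fin q → ℝ) (hr : ∀ v, 0 ≤ r v)
    (i : Fin k) (σ : Fin k → Equiv.Perm (Fin q)) :
    ∃ τ : Equiv.Perm (Fin q),
      (∀ τ' : Equiv.Perm (Fin q),
        utilR E r (Function.update σ i τ') i ≤ utilR E r (Function.update σ i τ) i) ∧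
      (∀ u v : Fin q, E (i, u) (i, v) → (τ u : ℕ) < τ v) := by
  classical
  set U : Equiv.Perm (Fin q) → ℝ := fun τ => utilR E r (Function.update σ i τ) i with hU
  set Inv : Equiv.Perm (Fin q) → Finset (Fin q × Fin q) := fun τ =>
    Finset.univ.filter fun p => E (i, p.1) (i, p.2) ∧ (τ p.2 : ℕ) < (τ p.1 : ℕ) with hInv
  -- a maximizer exists
  obtain ⟨τ₀, -, hτ₀⟩ := Finset.exists_max_image (Finset.univ : Finset (Equiv.Perm (Fin q)))
    U ⟨1, Finset.mem_univ 1⟩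
  set Max : Finset (Equiv.Perm (Fin q)) :=
    Finset.univ.filter (fun τ => ∀ τ', U τ' ≤ U τ) with hMaxdef
  have hMaxne : Max.Nonempty := ⟨τ₀, by
    simp only [hMaxdef, Finset.mem_filter, Finset.mem_univ, true_and]
    exact fun τ' => hτ₀ τ' (Finset.mem_univ _)⟩
  obtain ⟨τ, hτMax, hτmin⟩ := Finset.exists_min_image Max (fun τ => (Inv τ).card) hMaxne
  have hτMax' : ∀ τ', U τ' ≤ U τ := (Finset.mem_filter.mp hτMax).2
  -- main claim: Inv τ = ∅
  have hInvEmpty : Inv τ = ∅ := by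
    by_contra hne
    obtain ⟨p, hp, hpmin⟩ := Finset.exists_min_image (Inv τ)
      (fun p => (τ p.1 : ℕ) - (τ p.2 : ℕ)) (Finset.nonempty_iff_ne_empty.mpr hne)
    obtain ⟨u, v⟩ := p
    simp only [hInv, Finset.mem_filter, Finset.mem_univ, true_and] at hp
    obtain ⟨hEuv, hab⟩ := hp
    set a : ℕ := (τ v : ℕ) with ha
    set b : ℕ := (τ u : ℕ) with hb
    have huv : u ≠ v := fun h => hIrr _ (h ▸ hEuv)
    set τ' : Equiv.Perm (Fin q) := τ * Equiv.swap u v with hτ'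
    have hτ'u : τ' u = τ v := by simp [hτ', Equiv.swap_apply_left]
    have hτ'v : τ' v = τ u := by simp [hτ', Equiv.swap_apply_right]
    have hτ'w : ∀ w, w ≠ u → w ≠ v → τ' w = τ w := by
      intro w h1 h2; simp [hτ', Equiv.swap_apply_of_ne_of_ne h1 h2]
    -- injectivity helper
    have hval : ∀ x y : Fin q, (τ x : ℕ) = (τ y : ℕ) → x = y := by
      intro x y h; exact τ.injective (Fin.ext h)
    -- activation never increases under the swap
    have hact : ∀ j : Fin q,
        act E (Function.update σ i τ') (i, j) ≤ act E (Function.update σ i τ) (i, j) := by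
      intro j
      unfold act
      apply Finset.sup_le
      intro w hw
      rcases w with ⟨w1, w2⟩
      by_cases hw1 : w1 = i
      · subst hw1
        have hslot : ∀ (ρ : Equiv.Perm (Fin q)) (x : Fin q),
            slot (Function.update σ w1 ρ) (w1, x) = (ρ x : ℕ) + 1 := by
          intro ρ x; simp [slot, Function.update_self]
        rw [hslot]
        by_cases hwu : w2 = u
        · subst hwu
          rw [hτ'u]
          calc (τ v : ℕ) + 1 ≤ (τ w2 : ℕ) + 1 := by omega
            _ = slot (Function.update σ w1 τ) (w1, w2) := (hslot τ w2).symm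
            _ ≤ _ := Finset.le_sup hw
        · by_cases hwv : w2 = v
          · subst hwv
            rw [hτ'v]
            have hu_mem : (w1, u) ∈ insert (w1, j)
                (Finset.univ.filter fun w => E w (w1, j)) := by
              rcases Finset.mem_insert.mp hw with h | h
              · have hj : w2 = j := (Prod.mk.injEq _ _ _ _ ▸ h).2
                exact Finset.mem_insert_of_mem (Finset.mem_filter.mpr
                  ⟨Finset.mem_univ _, hj ▸ hEuv⟩)
              · have hEvj : E (w1, w2) (w1, j) := (Finset.mem_filter.mp h).2
                exact Finset.mem_insert_of_mem (Finset.mem_filter.mpr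
                  ⟨Finset.mem_univ _, hTrans hEuv hEvj⟩)
            calc (τ u : ℕ) + 1 = slot (Function.update σ w1 τ) (w1, u) := (hslot τ u).symm
              _ ≤ _ := Finset.le_sup hu_mem
          · rw [hτ'w w2 hwu hwv]
            calc (τ w2 : ℕ) + 1 = slot (Function.update σ w1 τ) (w1, w2) := (hslot τ w2).symm
              _ ≤ _ := Finset.le_sup hw
      · have : slot (Function.update σ i τ') (w1, w2)
            = slot (Function.update σ i τ) (w1, w2) := by
          simp [slot, Function.update_of_ne hw1]
        rw [this]
        exact Finset.le_sup hw
    -- utility does not decrease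
    have hUle : U τ ≤ U τ' := by
      simp only [hU, utilR]
      apply Finset.sum_le_sum
      intro j _
      apply mul_le_mul_of_nonneg_left _ (hr _)
      exact_mod_cast Nat.sub_le_sub_left (hact j) (q + 1)
    have hτ'Max : τ' ∈ Max := by
      simp only [hMaxdef, Finset.mem_filter, Finset.mem_univ, true_and]
      intro s
      exact le_trans (hτMax' s) hUle
    -- inversions strictly decrease
    have hsub : Inv τ' ⊆ Inv τ := by
      intro p hp
      rcases p with ⟨x, y⟩
      simp only [hInv, Finset.mem_filter, Finset.mem_univ, true_and] at hp ⊢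
      obtain ⟨hExy, hlt⟩ := hp
      refine ⟨hExy, ?_⟩
      have hxy : x ≠ y := fun h => hIrr _ (h ▸ hExy)
      by_cases hxu : x = u
      · subst hxu
        by_cases hyv : y = v
        · subst hyv; rw [hτ'u, hτ'v] at hlt; omega
        · have hyu : y ≠ x := hxy.symm
          rw [hτ'u, hτ'w y hyu hyv] at hlt
          omega
      · by_cases hxv : x = v
        · subst hxv
          by_cases hyu : y = u
          · subst hyu; exact absurd (hTrans hEuv hExy) (hIrr _)
          · have hyv : y ≠ x := hxy.symm
            rw [hτ'v, hτ'w y hyu hyv] at hlt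
            -- τ y < b; show τ y < a using minimality of the gap
            by_contra hya
            push_neg at hya
            have hya' : a < (τ y : ℕ) := by
              rcases lt_or_eq_of_le hya with h | h
              · exact h
              · exact absurd (hval _ _ h.symm) hyv
            have hmem : (u, y) ∈ Inv τ := by
              simp only [hInv, Finset.mem_filter, Finset.mem_univ, true_and]
              exact ⟨hTrans hEuv hExy, hlt⟩
            have := hpmin (u, y) hmem
            simp only at this
            omega
        · by_cases hyu : y = u
          · subst hyu
            rw [hτ'u, hτ'w x hxu hxv] at hlt
            -- a < τ x; show b < τ x using minimality of the gap
            by_contra hxb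
            push_neg at hxb
            have hxb' : (τ x : ℕ) < b := by
              rcases lt_or_eq_of_le hxb with h | h
              · exact h
              · exact absurd (hval _ _ h) hxu
            have hmem : (x, v) ∈ Inv τ := by
              simp only [hInv, Finset.mem_filter, Finset.mem_univ, true_and]
              exact ⟨hTrans hExy hEuv, hlt⟩
            have := hpmin (x, v) hmem
            simp only at this
            omega
          · by_cases hyv : y = v
            · subst hyv
              rw [hτ'v, hτ'w x hxu hxv] at hlt
              omega
            · rw [hτ'w x hxu hxv, hτ'w y hyu hyv] at hlt
              exact hlt
    have hmemτ : (u, v) ∈ Inv τ := by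
      simp only [hInv, Finset.mem_filter, Finset.mem_univ, true_and]
      exact ⟨hEuv, hab⟩
    have hnotτ' : (u, v) ∉ Inv τ' := by
      simp only [hInv, Finset.mem_filter, Finset.mem_univ, true_and, not_and]
      intro _
      rw [hτ'u, hτ'v]
      omega
    have hss : Inv τ' ⊂ Inv τ := ⟨hsub, fun h => hnotτ' (h hmemτ)⟩
    have := Finset.card_lt_card hss
    have := hτmin τ' hτ'Max
    omega
  refine ⟨τ, hτMax', ?_⟩
  intro u v hEuv
  have huv : u ≠ v := fun h => hIrr _ (h ▸ hEuv)
  have hne : (τ u : ℕ) ≠ (τ v : ℕ) := fun h => huv (τ.injective (Fin.ext h))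
  have hnot : ¬ ((τ v : ℕ) < (τ u : ℕ)) := by
    intro hlt
    have : (u, v) ∈ Inv τ := by
      simp only [hInv, Finset.mem_filter, Finset.mem_univ, true_and]
      exact ⟨hEuv, hlt⟩
    rw [hInvEmpty] at this
    exact absurd this (Finset.notMem_empty _)
  omega
end
end

section
/- Every interdependent scheduling game with uniform rewards admits a pure Nash equilibrium. That is, for any k players with disjoint service sets T_1,…,T_k of equal size q and any transitive DAG G on T = ∪T_i, there exists a schedule π = (π_1,…,π_k) such that for every player i and every bijection π'_i : T_i → {1,…,q}, the utility of player i under (π_{−i}, π'_i) is at most his utility under π. -/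
/-!
Order schedules by the lexicographic order of `s ↦ N_s`, the number of services (of all players)
active by time `s`; a maximiser is a pure Nash equilibrium. Writing a player's utility as
`∑ s, A_s` with `A_s` the number of his services active by `s`, a profitable deviation of player
`i` activates more of his services by some time `t`. Among the newly activated ones pick an
`E`-minimal `y`: by transitivity, each of `i`'s own predecessors of `y` was already active by `t`.
Hall's theorem then lets `i` redeploy so that every service active by a time `s ≤ t` stays active
by `s` (other players' slots are unchanged and activation is monotone along edges) and `y` becomes
active by `t`. So `N_s` does not decrease for `s ≤ t` and grows at `t`, contradicting maximality.
-/

open scoped Classical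
noncomputable section

open Finset

theorem Pi.toLex_lt_of_forall_le_of_lt {ι β : Type*} [LinearOrder ι] [WellFoundedLT ι]
    [LinearOrder β] {x y : ι → β} {i : ι} (hle : ∀ j < i, x j ≤ y j) (hlt : x i < y i) :
    toLex x < toLex y := by
  refine lt_of_not_ge fun hyx => ?_
  have heq : ∀ j < i, y j = x j := by
    intro j
    induction j using WellFoundedLT.induction with
    | _ j ih =>
      intro hj
      exact le_antisymm (apply_le_of_toLex hyx fun m hm => ih m hm (hm.trans hj)) (hle j hj)
  exact (apply_le_of_toLex hyx heq).not_gt hlt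

theorem Equiv.Perm.exists_val_lt_of_card_le {q : ℕ} (d : Fin q → ℕ)
    (hd : ∀ s, #{j | d j ≤ s} ≤ s) : ∃ π : Equiv.Perm (Fin q), ∀ j, (π j : ℕ) < d j := by
  let slots (j : Fin q) : Finset (Fin q) := {s | (s : ℕ) < d j}
  have hall (S : Finset (Fin q)) : #S ≤ #(S.biUnion slots) := by
    rcases S.eq_empty_or_nonempty with rfl | hS
    · simp
    obtain ⟨j, hj, hmax⟩ := S.exists_max_image d hS
    calc #S ≤ min q (d j) :=
          le_min (card_le_univ S |>.trans_eq (Fintype.card_fin q))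
            ((card_le_card fun m hm => mem_filter.2 ⟨mem_univ m, hmax m hm⟩).trans (hd _))
      _ = #(slots j) := Fin.card_filter_val_lt.symm
      _ ≤ #(S.biUnion slots) := card_le_card (subset_biUnion_of_mem slots hj)
  obtain ⟨f, hf, hfd⟩ := (all_card_le_biUnion_card_iff_exists_injective slots).1 hall
  exact ⟨Equiv.ofBijective f (Finite.injective_iff_bijective.1 hf),
    fun j => by simpa [slots] using hfd j⟩

section

variable {k q : ℕ} {E : Fin k × Fin q → Fin k × Fin q → Prop}
  {σ σ' : Fin k → Equiv.Perm (Fin q)} {i : Fin k} {π : Equiv.Perm (Fin q)}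

lemma act_le_iff {v : Fin k × Fin q} {s : ℕ} :
    act E σ v ≤ s ↔ slot σ v ≤ s ∧ ∀ u, E u v → slot σ u ≤ s := by
  simp [act]

lemma slot_le_act (v : Fin k × Fin q) : slot σ v ≤ act E σ v :=
  (act_le_iff.1 le_rfl).1

lemma slot_le_act_of_adj {u v : Fin k × Fin q} (h : E u v) : slot σ u ≤ act E σ v :=
  (act_le_iff.1 le_rfl).2 u h

lemma act_le_act_of_adj (hT : Transitive E) {u v : Fin k × Fin q} (h : E u v) :
    act E σ u ≤ act E σ v :=
  act_le_iff.2 ⟨slot_le_act_of_adj h, fun _ hw => slot_le_act_of_adj (hT hw h)⟩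

lemma slot_update_self (j : Fin q) : slot (Function.update σ i π) (i, j) = π j + 1 := by
  simp [slot]

lemma slot_update_of_ne {u : Fin k × Fin q} (h : u.1 ≠ i) :
    slot (Function.update σ i π) u = slot σ u := by
  simp [slot, Function.update_of_ne h]

variable (E σ i) in
def activeBy (s : ℕ) : Finset (Fin q) := {j | act E σ (i, j) ≤ s}

lemma card_activeBy_le (s : ℕ) : #(activeBy E σ i s) ≤ s := by
  simpa using card_le_card_of_injOn (fun j => (σ i j : ℕ)) (t := range s)
    (fun j hj => by
      have := (slot_le_act (i, j)).trans (mem_filter.1 hj).2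
      simp only [slot] at this
      simp only [coe_range, Set.mem_Iio]
      omega)
    (fun a _ b _ hab => (σ i).injective (Fin.val_injective hab))

lemma util_eq_sum_card_activeBy : util E σ i = ∑ s ∈ range q, #(activeBy E σ i (s + 1)) := by
  have hterm (j : Fin q) : q + 1 - act E σ (i, j) = #{s ∈ range q | act E σ (i, j) ≤ s + 1} := by
    have hpos : 1 ≤ act E σ (i, j) := (Nat.le_add_left 1 _).trans (slot_le_act (i, j))
    rw [show {s ∈ range q | act E σ (i, j) ≤ s + 1} = Ico (act E σ (i, j) - 1) q by
      ext s; simp only [mem_filter, mem_range, mem_Ico]; omega, Nat.card_Ico]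
    omega
  simp only [util, hterm, activeBy, card_filter]
  exact sum_comm

lemma exists_card_activeBy_lt (h : util E σ i < util E σ' i) :
    ∃ t, #(activeBy E σ i t) < #(activeBy E σ' i t) := by
  rw [util_eq_sum_card_activeBy, util_eq_sum_card_activeBy] at h
  obtain ⟨s, -, hs⟩ := exists_lt_of_sum_lt h
  exact ⟨s + 1, hs⟩

lemma exists_minimal_newly_active (hT : Transitive E) (hI : Irreflexive E) {t : ℕ}
    (h : #(activeBy E σ i t) < #(activeBy E σ' i t)) :
    ∃ y, act E σ' (i, y) ≤ t ∧ t < act E σ (i, y) ∧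
      ∀ z, E (i, z) (i, y) → act E σ (i, z) ≤ t := by
  let R (a b : Fin q) : Prop := E (i, a) (i, b)
  have : IsTrans (Fin q) R := ⟨fun _ _ _ hab hbc => hT hab hbc⟩
  have : Std.Irrefl R := ⟨fun a => hI (i, a)⟩
  obtain ⟨y0, hy0', hy0⟩ := exists_mem_notMem_of_card_lt_card h
  obtain ⟨y, ⟨hy', hy⟩, hmin⟩ := (Finite.wellFounded_of_trans_of_irrefl R).has_min
    {j | act E σ' (i, j) ≤ t ∧ t < act E σ (i, j)}
    ⟨y0, (mem_filter.1 hy0').2, not_le.1 fun h => hy0 (mem_filter.2 ⟨mem_univ _, h⟩)⟩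
  refine ⟨y, hy', hy, fun z hzy => not_lt.1 fun hz => hmin z ⟨?_, hz⟩ hzy⟩
  exact (act_le_act_of_adj hT hzy).trans hy'

lemma exists_perm_lt_act {t : ℕ} {y : Fin q} (hy : t < act E σ (i, y))
    (hcard : #(activeBy E σ i t) < t) :
    ∃ π : Equiv.Perm (Fin q), (π y : ℕ) < t ∧
      ∀ j, act E σ (i, j) ≤ t → (π j : ℕ) < act E σ (i, j) := by
  let d (j : Fin q) : ℕ := if act E σ (i, j) ≤ t then act E σ (i, j) else if j = y then t else q
  obtain ⟨π, hπ⟩ := Equiv.Perm.exists_val_lt_of_card_le d fun s => by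
    rcases le_or_gt q s with hqs | hsq
    · exact (card_filter_le _ _).trans (by simpa using hqs)
    rcases lt_or_ge s t with hst | hts
    · refine (card_le_card fun j hj => ?_).trans (card_activeBy_le (E := E) (σ := σ) (i := i) s)
      have hj := (mem_filter.1 hj).2
      simp only [d] at hj
      split_ifs at hj <;> first | omega | exact mem_filter.2 ⟨mem_univ _, hj⟩
    · refine (card_le_card fun j hj => ?_).trans
        ((card_insert_le y (activeBy E σ i t)).trans (by omega))
      have hj := (mem_filter.1 hj).2
      simp only [d] at hj
      split_ifs at hj with h1 h2
      · exact mem_insert_of_mem (mem_filter.2 ⟨mem_univ _, h1⟩)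
      · exact mem_insert.2 (Or.inl h2)
      · omega
  refine ⟨π, ?_, fun j hj => ?_⟩
  · simpa [d, not_le.2 hy] using hπ y
  · simpa [d, hj] using hπ j

lemma slot_update_le {t s : ℕ} (hπ : ∀ j, act E σ (i, j) ≤ t → (π j : ℕ) < act E σ (i, j))
    (hst : s ≤ t) {u : Fin k × Fin q} (hu : act E σ u ≤ s) :
    slot (Function.update σ i π) u ≤ s := by
  obtain ⟨i', j⟩ := u
  by_cases h : i' = i
  · subst h
    rw [slot_update_self]
    have := hπ j (hu.trans hst)
    omega
  · rw [slot_update_of_ne h]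
    exact (slot_le_act _).trans hu

lemma act_update_le (hT : Transitive E) {t s : ℕ}
    (hπ : ∀ j, act E σ (i, j) ≤ t → (π j : ℕ) < act E σ (i, j)) (hst : s ≤ t)
    {w : Fin k × Fin q} (hw : act E σ w ≤ s) : act E (Function.update σ i π) w ≤ s :=
  act_le_iff.2 ⟨slot_update_le hπ hst hw,
    fun _ hu => slot_update_le hπ hst ((act_le_act_of_adj hT hu).trans hw)⟩

lemma act_update_self_le {τ : Equiv.Perm (Fin q)} {t : ℕ} {y : Fin q}
    (hπ : ∀ j, act E σ (i, j) ≤ t → (π j : ℕ) < act E σ (i, j)) (hπy : (π y : ℕ) < t)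
    (hy : act E (Function.update σ i τ) (i, y) ≤ t)
    (hpred : ∀ z, E (i, z) (i, y) → act E σ (i, z) ≤ t) :
    act E (Function.update σ i π) (i, y) ≤ t := by
  refine act_le_iff.2 ⟨by rw [slot_update_self]; omega, fun ⟨i', z⟩ hzy => ?_⟩
  by_cases h : i' = i
  · subst h
    exact slot_update_le hπ le_rfl (hpred z hzy)
  · rw [slot_update_of_ne h, ← slot_update_of_ne (π := τ) h]
    exact (slot_le_act_of_adj hzy).trans hy

variable (E σ) in
def numActive (s : ℕ) : ℕ := #{v | act E σ v ≤ s}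

lemma toLex_numActive_lt {t : ℕ} (hpres : ∀ s ≤ t, ∀ w, act E σ w ≤ s → act E σ' w ≤ s)
    {v : Fin k × Fin q} (hv : t < act E σ v) (hv' : act E σ' v ≤ t) :
    toLex (numActive E σ) < toLex (numActive E σ') := by
  have hsub (s : ℕ) (hs : s ≤ t) :
      ({v | act E σ v ≤ s} : Finset (Fin k × Fin q)) ⊆ ({v | act E σ' v ≤ s} : Finset _) :=
    fun w hw => mem_filter.2 ⟨mem_univ _, hpres s hs w (mem_filter.1 hw).2⟩
  refine Pi.toLex_lt_of_forall_le_of_lt (i := t) (fun s hs => card_le_card (hsub s hs.le)) ?_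
  refine card_lt_card ((ssubset_iff_of_subset (hsub t le_rfl)).2 ⟨v, ?_, ?_⟩)
  · exact mem_filter.2 ⟨mem_univ _, hv'⟩
  · exact fun h => (mem_filter.1 h).2.not_gt hv

lemma exists_perm_toLex_numActive_lt (hT : Transitive E) (hI : Irreflexive E)
    {τ : Equiv.Perm (Fin q)} (hgain : util E σ i < util E (Function.update σ i τ) i) :
    ∃ π, toLex (numActive E σ) < toLex (numActive E (Function.update σ i π)) := by
  obtain ⟨t, ht⟩ := exists_card_activeBy_lt hgain
  obtain ⟨y, hy', hy, hpred⟩ := exists_minimal_newly_active hT hI ht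
  obtain ⟨π, hπy, hπ⟩ := exists_perm_lt_act hy (ht.trans_le (card_activeBy_le t))
  exact ⟨π, toLex_numActive_lt (fun s hs w hw => act_update_le hT hπ hs hw) hy
    (act_update_self_le hπ hπy hy' hpred)⟩

end

theorem stmt_11 {k q : ℕ} (E : Fin k × Fin q → Fin k × Fin q → Prop)
    (hTrans : Transitive E) (hIrr : Irreflexive E) :
    ∃ σ : Fin k → Equiv.Perm (Fin q), PNE E σ := by
  obtain ⟨σ, -, hmax⟩ := exists_max_image univ (fun σ => toLex (numActive E σ)) univ_nonempty
  refine ⟨σ, fun i τ => not_lt.1 fun hgain => ?_⟩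
  obtain ⟨π, hπ⟩ := exists_perm_toLex_numActive_lt hTrans hIrr hgain
  exact (hmax _ (mem_univ _)).not_gt hπ
end
end
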